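/- Let C ≥ 1, α > 1, β > 2, κ > 3 be real numbers and let λ > 0 be sufficiently small (depending on C, α, β, κ). Set a = 2C/λ and A = 30C. Then there exists ε > 0 such that: if f : [0,∞) → [0,∞) is continuous and satisfies f(t) + λ ∫_τ^t f ≤ C(1 + λ^α (t−τ)) f(τ) + C(λ² + λ^β (t−τ) + λ^κ (t−τ)²) ∫_τ^t f for all 0 ≤ τ ≤ t, and f(0) ≤ ε, then f(t) ≤ A ε e^{−t/a} for all t ≥ 0. -/

import Mathlib

/-!
On a window of length `T = λ^(-s)` with `1 < s < min α (β - 1) ((κ - 1) / 2)` the error terms of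
the hypothesis are negligible for small `λ`: it becomes `f t + (3λ/4) ∫_s^t f ≤ (5C/4) f s`, and a
backward Gronwall argument (the integrating factor `e^{cs}` makes `e^{cs} (μ ∫_s^t f + f t)`
antitone) gives decay at rate `3λ/(5C)` across the window, at the price of the factor `5C/4`.
Since `λ T = λ^(1-s) → ∞`, the surplus rate `λ/(10C)` absorbs `log (5C/4)` over one window, and
chaining windows gives decay at rate `λ/(2C)` for all time.
-/

open Real MeasureTheory Filter Set Topology

theorem le_mul_exp_neg_of_add_integral_le {g : ℝ → ℝ} {τ t μ K : ℝ}
    (hg : ContinuousOn g (Icc τ t)) (hμ : 0 ≤ μ) (hK : 0 < K) (hτt : τ ≤ t)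
    (H : ∀ s ∈ Icc τ t, g t + μ * (∫ x in s..t, g x) ≤ K * g s) :
    g t ≤ K * g τ * exp (-(μ / K) * (t - τ)) := by
  set c := μ / K with hc
  set Φ : ℝ → ℝ := fun s => ∫ x in s..t, g x
  set ψ : ℝ → ℝ := fun s => exp (c * s) * (μ * Φ s + g t)
  have hΦ_cont : ContinuousOn Φ (Icc τ t) := by
    have := intervalIntegral.continuousOn_primitive_interval_left
      (μ := volume) (a := τ) (b := t) (f := g)
      (by rw [uIcc_of_le hτt]; exact hg.integrableOn_Icc)
    rwa [uIcc_of_le hτt] at this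
  have hψ_deriv : ∀ s ∈ Ioo τ t,
      HasDerivAt ψ (exp (c * s) * (c * (μ * Φ s + g t) - μ * g s)) s := by
    intro s hs
    have hΦ : HasDerivAt Φ (-g s) s :=
      intervalIntegral.integral_hasDerivAt_left
        ((hg.mono (Icc_subset_Icc hs.1.le le_rfl)).intervalIntegrable_of_Icc hs.2.le)
        ((hg.mono Ioo_subset_Icc_self).stronglyMeasurableAtFilter isOpen_Ioo s hs)
        (hg.continuousAt (Icc_mem_nhds hs.1 hs.2))
    have hexp : HasDerivAt (fun u => exp (c * u)) (exp (c * s) * c) s := by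
      simpa using ((hasDerivAt_id s).const_mul c).exp
    exact (hexp.mul ((hΦ.const_mul μ).add_const (g t))).congr_deriv (by ring)
  have hψ_anti : AntitoneOn ψ (Icc τ t) := by
    refine antitoneOn_of_hasDerivWithinAt_nonpos (convex_Icc τ t)
      ((continuous_exp.comp (continuous_const_mul c)).continuousOn.mul
        ((hΦ_cont.const_smul μ).add continuousOn_const))
      (fun s hs => (hψ_deriv s (by rwa [interior_Icc] at hs)).hasDerivWithinAt) fun s hs => ?_
    rw [interior_Icc] at hs
    have : c * (μ * Φ s + g t) ≤ μ * g s := by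
      calc c * (μ * Φ s + g t) ≤ c * (K * g s) := by
            refine mul_le_mul_of_nonneg_left ?_ (by positivity)
            linarith [H s (Ioo_subset_Icc_self hs)]
        _ = μ * g s := by rw [hc]; field_simp
    exact mul_nonpos_of_nonneg_of_nonpos (exp_pos _).le (by linarith)
  have hψτt : exp (c * t) * g t ≤ exp (c * τ) * (K * g τ) := by
    have h : exp (c * t) * (μ * Φ t + g t) ≤ exp (c * τ) * (μ * Φ τ + g t) :=
      hψ_anti ⟨le_rfl, hτt⟩ ⟨hτt, le_rfl⟩ hτt
    rw [show Φ t = 0 from intervalIntegral.integral_same, mul_zero, zero_add] at h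
    exact h.trans (by gcongr; linarith [H τ ⟨le_rfl, hτt⟩])
  rw [show -c * (t - τ) = c * τ - c * t by ring, exp_sub, ← mul_div_assoc,
    le_div_iff₀ (exp_pos _)]
  linarith

theorem le_mul_exp_neg_of_forall_window {f : ℝ → ℝ} {T K c d : ℝ} (hT : 0 < T) (hK : 1 ≤ K)
    (hf₀ : 0 ≤ f 0) (hcd : log K ≤ (c - d) * T)
    (hwin : ∀ τ t, 0 ≤ τ → τ ≤ t → t ≤ τ + T → f t ≤ K * f τ * exp (-c * (t - τ)))
    {t : ℝ} (ht : 0 ≤ t) : f t ≤ K * f 0 * exp (-d * t) := by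
  have hdc : d ≤ c := by nlinarith [log_nonneg hK]
  have hstep : K * exp (-c * T) ≤ exp (-d * T) := by
    rw [← exp_log (by linarith : 0 < K), ← exp_add]
    gcongr
    linarith
  have hgrid (n : ℕ) : f (n * T) ≤ f 0 * exp (-d * (n * T)) := by
    induction n with
    | zero => simp
    | succ n ih =>
      have hnT : 0 ≤ (n : ℝ) * T := by positivity
      calc f ((n + 1 : ℕ) * T) ≤ K * f (n * T) * exp (-c * T) := by
            simpa [add_mul] using hwin (n * T) ((n + 1) * T) hnT (by linarith) (by linarith)
        _ ≤ (K * exp (-c * T)) * (f 0 * exp (-d * (n * T))) := by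
            rw [mul_right_comm]; gcongr
        _ ≤ exp (-d * T) * (f 0 * exp (-d * (n * T))) := by
            gcongr
        _ = f 0 * exp (-d * ((n + 1 : ℕ) * T)) := by
            rw [mul_left_comm, ← exp_add]; push_cast; ring_nf
  set n := ⌊t / T⌋₊
  have hn : n * T ≤ t := (le_div_iff₀ hT).1 (Nat.floor_le (by positivity))
  have hn' : t ≤ n * T + T := by
    have := (div_lt_iff₀ hT).1 (Nat.lt_floor_add_one (t / T)); linarith
  have hnT : 0 ≤ (n : ℝ) * T := by positivity
  calc f t ≤ K * f (n * T) * exp (-c * (t - n * T)) := hwin _ _ hnT hn hn'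
    _ ≤ K * (f 0 * exp (-d * (n * T))) * exp (-d * (t - n * T)) := by
        gcongr
        exact hgrid n
    _ = K * f 0 * exp (-d * t) := by
        rw [mul_assoc K, mul_assoc, mul_assoc, ← exp_add]; ring_nf

theorem add_integral_le_of_short_window {C α β κ lam T s t : ℝ} {f : ℝ → ℝ} (hC : 0 ≤ C)
    (hlam : 0 < lam) (hα : lam ^ α * T ≤ 1 / 4)
    (hη : C * (lam ^ (2:ℝ) + lam ^ β * T + lam ^ κ * T ^ 2) ≤ lam / 4)
    (hf : ∀ x, 0 ≤ x → 0 ≤ f x)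
    (hineq : ∀ τ t : ℝ, 0 ≤ τ → τ ≤ t →
      f t + lam * (∫ x in Icc τ t, f x)
        ≤ C * (1 + lam ^ α * (t - τ)) * f τ
          + C * (lam ^ (2:ℝ) + lam ^ β * (t - τ) + lam ^ κ * (t - τ) ^ 2)
            * (∫ x in Icc τ t, f x))
    (hs : 0 ≤ s) (hst : s ≤ t) (ht : t ≤ s + T) :
    f t + 3 * lam / 4 * (∫ x in s..t, f x) ≤ 5 * C / 4 * f s := by
  have hI : (∫ x in Icc s t, f x) = ∫ x in s..t, f x := by
    rw [intervalIntegral.integral_of_le hst, integral_Icc_eq_integral_Ioc]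
  have hI₀ : 0 ≤ ∫ x in s..t, f x :=
    intervalIntegral.integral_nonneg hst fun x hx => hf x (hs.trans hx.1)
  have hα' : C * (1 + lam ^ α * (t - s)) ≤ 5 * C / 4 := by
    have : lam ^ α * (t - s) ≤ lam ^ α * T := by gcongr; linarith
    nlinarith
  have hη' : C * (lam ^ (2:ℝ) + lam ^ β * (t - s) + lam ^ κ * (t - s) ^ 2) ≤ lam / 4 := by
    refine le_trans ?_ hη
    gcongr <;> linarith
  have h := hineq s t hs hst
  rw [hI] at h
  nlinarith [mul_le_mul_of_nonneg_right hα' (hf s hs), mul_le_mul_of_nonneg_right hη' hI₀]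

theorem tendsto_rpow_nhdsGT_zero {e : ℝ} (he : 0 < e) :
    Tendsto (fun x : ℝ => x ^ e) (𝓝[>] 0) (𝓝 0) := by
  simpa [zero_rpow he.ne'] using
    (continuousAt_rpow_const 0 e (Or.inr he.le)).tendsto.mono_left nhdsWithin_le_nhds

theorem eventually_window_conditions {C α β κ s : ℝ} (hC : 0 < C) (hs : 1 < s) (hsα : s < α)
    (hsβ : s + 1 < β) (hsκ : 2 * s + 1 < κ) :
    ∀ᶠ lam in 𝓝[>] (0:ℝ), lam ^ α * lam ^ (-s) ≤ 1 / 4 ∧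
      C * (lam ^ (2:ℝ) + lam ^ β * lam ^ (-s) + lam ^ κ * (lam ^ (-s)) ^ 2) ≤ lam / 4 ∧
      log (5 * C / 4) ≤ lam / (10 * C) * lam ^ (-s) := by
  have h₁ := tendsto_rpow_nhdsGT_zero (e := α - s) (by linarith)
  have h₂ : Tendsto (fun l => C * (l + l ^ (β - s - 1) + l ^ (κ - 2 * s - 1))) (𝓝[>] 0)
      (𝓝 0) := by
    simpa using (((tendsto_id.mono_left nhdsWithin_le_nhds).add
      (tendsto_rpow_nhdsGT_zero (by linarith))).add
        (tendsto_rpow_nhdsGT_zero (by linarith))).const_mul C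
  have h₃ : Tendsto (fun l => l ^ (1 - s) / (10 * C)) (𝓝[>] 0) atTop :=
    (tendsto_rpow_neg_nhdsGT_zero (by linarith)).atTop_div_const (by positivity)
  filter_upwards [h₁.eventually (ge_mem_nhds (by norm_num : (0:ℝ) < 1 / 4)),
    h₂.eventually (ge_mem_nhds (by norm_num : (0:ℝ) < 1 / 4)),
    h₃.eventually_ge_atTop (log (5 * C / 4)), self_mem_nhdsWithin] with l h₁ h₂ h₃ (hl : 0 < l)
  have e₁ : l ^ α * l ^ (-s) = l ^ (α - s) := by rw [← rpow_add hl, sub_eq_add_neg]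
  have e₂ : l ^ (2:ℝ) + l ^ β * l ^ (-s) + l ^ κ * (l ^ (-s)) ^ 2
      = l * (l + l ^ (β - s - 1) + l ^ (κ - 2 * s - 1)) := by
    have hβ' : l ^ (β - s) = l ^ β * l ^ (-s) := by rw [sub_eq_add_neg, rpow_add hl]
    have hκ' : l ^ (κ - 2 * s) = l ^ κ * l ^ (-s) * l ^ (-s) := by
      rw [mul_assoc, ← rpow_add hl, ← rpow_add hl]; ring_nf
    rw [rpow_sub_one hl.ne', rpow_sub_one hl.ne', hβ', hκ', rpow_two]
    field_simp
  have e₃ : l / (10 * C) * l ^ (-s) = l ^ (1 - s) / (10 * C) := by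
    rw [sub_eq_add_neg, rpow_add hl, rpow_one]; ring
  refine ⟨e₁ ▸ h₁, ?_, e₃ ▸ h₃⟩
  rw [e₂]
  nlinarith

theorem stmt_0 (C α β κ : ℝ) (hC : 1 ≤ C) (hα : 1 < α) (hβ : 2 < β) (hκ : 3 < κ) :
    ∃ lam₀ > (0:ℝ), ∀ lam : ℝ, 0 < lam → lam ≤ lam₀ →
      ∃ ε > (0:ℝ), ∀ f : ℝ → ℝ,
        ContinuousOn f (Set.Ici 0) →
        (∀ s, 0 ≤ s → 0 ≤ f s) →
        (∀ τ t : ℝ, 0 ≤ τ → τ ≤ t →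
          f t + lam * (∫ s in Set.Icc τ t, f s)
            ≤ C * (1 + lam ^ α * (t - τ)) * f τ
              + C * (lam ^ (2:ℝ) + lam ^ β * (t - τ) + lam ^ κ * (t - τ)^2)
                * (∫ s in Set.Icc τ t, f s)) →
        f 0 ≤ ε →
        ∀ t : ℝ, 0 ≤ t → f t ≤ 30 * C * ε * Real.exp (-t / (2 * C / lam)) := by
  have hC₀ : 0 < C := by linarith
  obtain ⟨s, hs₁, hs⟩ := exists_between
    (lt_min hα (lt_min (by linarith : 1 < β - 1) (by linarith : 1 < (κ - 1) / 2)))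
  simp only [lt_min_iff] at hs
  obtain ⟨lam₀, hlam₀, hsmall⟩ := mem_nhdsGT_iff_exists_Ioc_subset.1
    (eventually_window_conditions (β := β) (κ := κ) hC₀ hs₁ hs.1 (by linarith) (by linarith))
  -- The bound is linear in `f 0`, so any `ε` works.
  refine ⟨lam₀, hlam₀, fun lam hlam hlam₀ => ⟨1, one_pos, fun f hf hf_nonneg hineq hf₀ t ht => ?_⟩⟩
  obtain ⟨hwα, hwη, hwlog⟩ := hsmall ⟨hlam, hlam₀⟩
  set T := lam ^ (-s)
  have hwin (τ t : ℝ) (hτ : 0 ≤ τ) (hτt : τ ≤ t) (htT : t ≤ τ + T) :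
      f t ≤ 5 * C / 4 * f τ * exp (-(3 * lam / 4 / (5 * C / 4)) * (t - τ)) :=
    le_mul_exp_neg_of_add_integral_le (hf.mono fun x hx => hτ.trans hx.1) (by positivity)
      (by positivity) hτt fun s hs => add_integral_le_of_short_window hC₀.le hlam hwα hwη
        hf_nonneg hineq (hτ.trans hs.1) hs.2 (by linarith [hs.1])
  have hrate : 3 * lam / 4 / (5 * C / 4) - lam / (2 * C) = lam / (10 * C) := by
    field_simp; ring
  have hdecay := le_mul_exp_neg_of_forall_window (d := lam / (2 * C)) (rpow_pos_of_pos hlam _)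
    (by linarith) (hf_nonneg 0 le_rfl) (hrate ▸ hwlog) hwin ht
  calc f t ≤ 5 * C / 4 * f 0 * exp (-(lam / (2 * C)) * t) := hdecay
      _ ≤ 30 * C * 1 * exp (-t / (2 * C / lam)) := by
        rw [show -t / (2 * C / lam) = -(lam / (2 * C)) * t by field_simp]
        gcongr ?_ * _
        exact mul_le_mul (by linarith) hf₀ (hf_nonneg 0 le_rfl) (by positivity)
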